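/- arXiv:2505.15200 — 2 statements merged into one kernel-verified Lean document; each statement's English description precedes it below -/
import Mathlib

section
/- For 0 ≤ a < b, the first-order Marcum Q-function satisfies Q₁(a,b) ≤ exp(-(b-a)²/2). -/
open Real

/-- Modified Bessel function of the first kind of order zero. -/
noncomputable def besselI0 (x : ℝ) : ℝ :=
  ∑' k : ℕ, (x / 2) ^ (2 * k) / ((Nat.factorial k : ℝ)) ^ 2

/-- First-order Marcum Q-function `Q₁(a,b) = ∫_b^∞ t e^{-(t²+a²)/2} I₀(at) dt`. -/
noncomputable def marcumQ1 (a b : ℝ) : ℝ :=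
  ∫ t in Set.Ioi b, t * Real.exp (-(t ^ 2 + a ^ 2) / 2) * besselI0 (a * t)

/-!
With `x = a²/2`, `y = b²/2`, expanding `I₀` and integrating term by term
(`∫_b^∞ t e^{-t²/2} (t²/2)ᵏ/k! dt = e^{-y} ∑_{j≤k} yʲ/j!`) gives
`Q₁(a,b) = e^{-x-y} ∑ₖ xᵏ/k! ∑_{j≤k} yʲ/j!`.
With `c = ab/2` we have `x ≤ c` and `xy = c²`, so `xᵏ yʲ ≤ c^{k+j}` for `j ≤ k`; the double sum
is therefore at most `e^c · e^c`, and `-x - y + 2c = -(b-a)²/2`.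
-/

open Finset MeasureTheory Filter Topology Nat

noncomputable def expTaylor (k : ℕ) (x : ℝ) : ℝ := ∑ j ∈ range (k + 1), x ^ j / j !

lemma expTaylor_nonneg (k : ℕ) {x : ℝ} (hx : 0 ≤ x) : 0 ≤ expTaylor k x :=
  sum_nonneg fun _ _ => by positivity

lemma expTaylor_le_exp (k : ℕ) {x : ℝ} (hx : 0 ≤ x) : expTaylor k x ≤ exp x :=
  sum_le_exp_of_nonneg hx (k + 1)

lemma hasDerivAt_pow_succ_div_factorial (k : ℕ) (x : ℝ) :
    HasDerivAt (fun x : ℝ => x ^ (k + 1) / (k + 1)!) (x ^ k / k !) x := by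
  refine ((hasDerivAt_pow (k + 1) x).div_const ((k + 1)! : ℝ)).congr_deriv ?_
  push_cast [factorial_succ, Nat.add_sub_cancel]
  field_simp

lemma hasDerivAt_exp_neg_mul_expTaylor (k : ℕ) (x : ℝ) :
    HasDerivAt (fun x => exp (-x) * expTaylor k x) (-(exp (-x) * (x ^ k / k !))) x := by
  have hexp : HasDerivAt (fun x => exp (-x)) (-exp (-x)) x := by
    simpa using (hasDerivAt_neg x).exp
  induction k with
  | zero => simpa [expTaylor] using hexp
  | succ k ih =>
    have hsplit : (fun x => exp (-x) * expTaylor (k + 1) x) =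
        fun x => exp (-x) * expTaylor k x + exp (-x) * (x ^ (k + 1) / (k + 1)!) := by
      ext x; rw [expTaylor, sum_range_succ, mul_add]; rfl
    rw [hsplit]
    exact (ih.fun_add (hexp.fun_mul (hasDerivAt_pow_succ_div_factorial k x))).congr_deriv
      (by ring)

lemma tendsto_exp_neg_mul_expTaylor_atTop (k : ℕ) :
    Tendsto (fun x => exp (-x) * expTaylor k x) atTop (𝓝 0) := by
  have hterm : ∀ j ∈ range (k + 1), Tendsto (fun x => x ^ j * exp (-x) / j !) atTop (𝓝 0) :=
    fun j _ => by simpa using (tendsto_pow_mul_exp_neg_atTop_nhds_zero j).div_const (j ! : ℝ)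
  convert tendsto_finsetSum _ hterm using 1
  · ext x; rw [expTaylor, mul_sum]; congr 1; ext j; ring
  · simp

lemma pow_mul_pow_le_pow_add {x y c : ℝ} (hx : 0 ≤ x) (hy : 0 ≤ y) (hxc : x ≤ c)
    (hxy : x * y ≤ c ^ 2) {j k : ℕ} (hjk : j ≤ k) : x ^ k * y ^ j ≤ c ^ (k + j) := by
  obtain ⟨d, rfl⟩ := Nat.exists_eq_add_of_le hjk
  calc x ^ (j + d) * y ^ j = (x * y) ^ j * x ^ d := by ring
    _ ≤ (c ^ 2) ^ j * c ^ d := by gcongr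
    _ = c ^ (j + d + j) := by ring

lemma pow_div_factorial_mul_expTaylor_le {x y c : ℝ} (hx : 0 ≤ x) (hy : 0 ≤ y) (hxc : x ≤ c)
    (hxy : x * y ≤ c ^ 2) (k : ℕ) : x ^ k / k ! * expTaylor k y ≤ c ^ k / k ! * exp c := by
  have hc : 0 ≤ c := hx.trans hxc
  calc x ^ k / k ! * expTaylor k y = ∑ j ∈ range (k + 1), x ^ k * y ^ j / (k ! * j !) := by
        rw [expTaylor, mul_sum]; congr 1; ext j; ring
    _ ≤ ∑ j ∈ range (k + 1), c ^ (k + j) / (k ! * j !) := by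
        gcongr with j hj
        exact pow_mul_pow_le_pow_add hx hy hxc hxy (Nat.lt_succ_iff.mp (mem_range.mp hj))
    _ = c ^ k / k ! * expTaylor k c := by
        rw [expTaylor, mul_sum]; congr 1; ext j; ring
    _ ≤ c ^ k / k ! * exp c := by gcongr; exact expTaylor_le_exp k hc

lemma summable_pow_div_factorial_mul_expTaylor {x y : ℝ} (hx : 0 ≤ x) (hy : 0 ≤ y) :
    Summable fun k => x ^ k / k ! * expTaylor k y :=
  .of_nonneg_of_le (fun k => mul_nonneg (by positivity) (expTaylor_nonneg k hy))
    (fun k => by gcongr; exact expTaylor_le_exp k hy) ((summable_pow_div_factorial x).mul_right _)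

lemma tsum_pow_div_factorial_mul_expTaylor_le {x y c : ℝ} (hx : 0 ≤ x) (hy : 0 ≤ y)
    (hxc : x ≤ c) (hxy : x * y ≤ c ^ 2) :
    ∑' k, x ^ k / k ! * expTaylor k y ≤ exp c * exp c := by
  have hexp : ∑' k : ℕ, c ^ k / k ! = exp c := by
    rw [Real.exp_eq_exp_ℝ, NormedSpace.exp_eq_tsum_div]
  calc ∑' k, x ^ k / k ! * expTaylor k y ≤ ∑' k : ℕ, c ^ k / k ! * exp c :=
        (summable_pow_div_factorial_mul_expTaylor hx hy).tsum_le_tsum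
          (pow_div_factorial_mul_expTaylor_le hx hy hxc hxy)
          ((summable_pow_div_factorial c).mul_right _)
    _ = exp c * exp c := by rw [tsum_mul_right, hexp]

lemma hasDerivAt_neg_exp_neg_sq_mul_expTaylor (k : ℕ) (t : ℝ) :
    HasDerivAt (fun t => -(exp (-(t ^ 2 / 2)) * expTaylor k (t ^ 2 / 2)))
      (t * exp (-(t ^ 2 / 2)) * ((t ^ 2 / 2) ^ k / k !)) t := by
  have hsq : HasDerivAt (fun t : ℝ => t ^ 2 / 2) t t := by
    simpa using (hasDerivAt_pow 2 t).div_const 2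
  refine ((hasDerivAt_exp_neg_mul_expTaylor k (t ^ 2 / 2)).comp t hsq).neg.congr_deriv ?_
  ring

lemma tendsto_neg_exp_neg_sq_mul_expTaylor_atTop (k : ℕ) :
    Tendsto (fun t => -(exp (-(t ^ 2 / 2)) * expTaylor k (t ^ 2 / 2))) atTop (𝓝 0) := by
  have hsq : Tendsto (fun t : ℝ => t ^ 2 / 2) atTop atTop :=
    (tendsto_pow_atTop two_ne_zero).atTop_div_const two_pos
  simpa using ((tendsto_exp_neg_mul_expTaylor_atTop k).comp hsq).neg

lemma mul_exp_neg_sq_mul_pow_nonneg (k : ℕ) {t : ℝ} (ht : 0 ≤ t) :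
    0 ≤ t * exp (-(t ^ 2 / 2)) * ((t ^ 2 / 2) ^ k / k !) := by
  positivity

lemma integrableOn_Ioi_mul_exp_neg_sq_mul_pow (k : ℕ) {b : ℝ} (hb : 0 ≤ b) :
    IntegrableOn (fun t => t * exp (-(t ^ 2 / 2)) * ((t ^ 2 / 2) ^ k / k !)) (Set.Ioi b) :=
  integrableOn_Ioi_deriv_of_nonneg' (fun t _ => hasDerivAt_neg_exp_neg_sq_mul_expTaylor k t)
    (fun _ ht => mul_exp_neg_sq_mul_pow_nonneg k (hb.trans ht.le))
    (tendsto_neg_exp_neg_sq_mul_expTaylor_atTop k)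

lemma integral_Ioi_mul_exp_neg_sq_mul_pow (k : ℕ) {b : ℝ} (hb : 0 ≤ b) :
    ∫ t in Set.Ioi b, t * exp (-(t ^ 2 / 2)) * ((t ^ 2 / 2) ^ k / k !) =
      exp (-(b ^ 2 / 2)) * expTaylor k (b ^ 2 / 2) := by
  rw [integral_Ioi_of_hasDerivAt_of_nonneg'
    (fun t _ => hasDerivAt_neg_exp_neg_sq_mul_expTaylor k t)
    (fun _ ht => mul_exp_neg_sq_mul_pow_nonneg k (hb.trans ht.le))
    (tendsto_neg_exp_neg_sq_mul_expTaylor_atTop k)]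
  ring

lemma marcumQ1_integrand_eq_tsum (a t : ℝ) :
    t * exp (-(t ^ 2 + a ^ 2) / 2) * besselI0 (a * t) = exp (-(a ^ 2 / 2)) *
      ∑' k, (a ^ 2 / 2) ^ k / k ! * (t * exp (-(t ^ 2 / 2)) * ((t ^ 2 / 2) ^ k / k !)) := by
  rw [besselI0, ← tsum_mul_left, ← tsum_mul_left]
  congr 1; ext k
  have hexp : exp (-(t ^ 2 + a ^ 2) / 2) = exp (-(a ^ 2 / 2)) * exp (-(t ^ 2 / 2)) := by
    rw [← exp_add]; ring_nf
  have hpow : (a * t / 2) ^ (2 * k) = (a ^ 2 / 2) ^ k * (t ^ 2 / 2) ^ k := by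
    rw [pow_mul, ← mul_pow]; congr 1; ring
  rw [hexp, hpow]
  ring

lemma marcumQ1_eq_tsum (a : ℝ) {b : ℝ} (hb : 0 ≤ b) :
    marcumQ1 a b = exp (-(a ^ 2 / 2)) * exp (-(b ^ 2 / 2)) *
      ∑' k, (a ^ 2 / 2) ^ k / k ! * expTaylor k (b ^ 2 / 2) := by
  set F : ℕ → ℝ → ℝ := fun k t =>
    (a ^ 2 / 2) ^ k / k ! * (t * exp (-(t ^ 2 / 2)) * ((t ^ 2 / 2) ^ k / k !))
  have hF_int (k : ℕ) : IntegrableOn (F k) (Set.Ioi b) :=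
    (integrableOn_Ioi_mul_exp_neg_sq_mul_pow k hb).const_mul _
  have hF_integral (k : ℕ) : ∫ t in Set.Ioi b, F k t =
      exp (-(b ^ 2 / 2)) * ((a ^ 2 / 2) ^ k / k ! * expTaylor k (b ^ 2 / 2)) := by
    rw [integral_const_mul, integral_Ioi_mul_exp_neg_sq_mul_pow k hb]; ring
  have hF_norm (k : ℕ) : ∫ t in Set.Ioi b, ‖F k t‖ = ∫ t in Set.Ioi b, F k t :=
    setIntegral_congr_fun measurableSet_Ioi fun t ht => norm_of_nonneg <|
      mul_nonneg (by positivity) (mul_exp_neg_sq_mul_pow_nonneg k (hb.trans ht.le))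
  have hF_sum : Summable fun k => ∫ t in Set.Ioi b, ‖F k t‖ := by
    simp only [hF_norm, hF_integral]
    exact (summable_pow_div_factorial_mul_expTaylor (by positivity) (by positivity)).mul_left _
  calc marcumQ1 a b = ∫ t in Set.Ioi b, exp (-(a ^ 2 / 2)) * ∑' k, F k t :=
        setIntegral_congr_fun measurableSet_Ioi fun t _ => marcumQ1_integrand_eq_tsum a t
    _ = exp (-(a ^ 2 / 2)) * ∑' k, ∫ t in Set.Ioi b, F k t := by
        rw [integral_const_mul, integral_tsum_of_summable_integral_norm hF_int hF_sum]
    _ = _ := by simp only [hF_integral, tsum_mul_left, mul_assoc]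

theorem marcumQ1_exp_upper_bound (a b : ℝ) (ha : 0 ≤ a) (hab : a < b) :
    marcumQ1 a b ≤ Real.exp (-(b - a) ^ 2 / 2) := by
  have hb : 0 ≤ b := ha.trans hab.le
  calc marcumQ1 a b = exp (-(a ^ 2 / 2)) * exp (-(b ^ 2 / 2)) *
        ∑' k, (a ^ 2 / 2) ^ k / k ! * expTaylor k (b ^ 2 / 2) := marcumQ1_eq_tsum a hb
    _ ≤ exp (-(a ^ 2 / 2)) * exp (-(b ^ 2 / 2)) * (exp (a * b / 2) * exp (a * b / 2)) := by
        gcongr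
        refine tsum_pow_div_factorial_mul_expTaylor_le (by positivity) (by positivity) ?_
          (le_of_eq (by ring))
        nlinarith
    _ = exp (-(b - a) ^ 2 / 2) := by
        simp only [← exp_add]; ring_nf
end

section
/- The function Q₁(a, b) is nondecreasing in a ≥ 0 for each fixed b ≥ 0, and nonincreasing in b ≥ 0 for each fixed a ≥ 0. -/
/-!
Expanding `I₀` in its power series and integrating term by term gives, with `λ = a² / 2`,
`Q₁(a, b) = e^{-λ} ∑ₖ cₖ(b) λᵏ / k!`, where `cₖ(b) = ∫_b^∞ t^{2k+1} e^{-t²/2} dt / (2ᵏ k!)`.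
Each `cₖ` is nonincreasing in `b` and takes values in `[0, 1]`, which gives monotonicity in `b`.
Integration by parts gives `cₖ₊₁(b) - cₖ(b) = (b² / 2)^{k+1} e^{-b²/2} / (k+1)! ≥ 0`, and a Poisson
mixture `e^{-λ} ∑ₖ cₖ λᵏ / k!` of a bounded nondecreasing sequence is nondecreasing in `λ ≥ 0`:
its derivative is `e^{-λ} ∑ₖ (cₖ₊₁ - cₖ) λᵏ / k!`.
-/

open Real

open Set MeasureTheory
open scoped Nat

section ExpSeries

variable {c : ℕ → ℝ} {C : ℝ}

lemma summable_mul_pow_div_factorial (hc : ∀ k, |c k| ≤ C) (x : ℝ) :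
    Summable fun k => c k * x ^ k / k ! := by
  refine .of_norm_bounded ((summable_pow_div_factorial |x|).mul_left C) fun k => ?_
  rw [norm_div, norm_mul, norm_pow, Real.norm_eq_abs, Real.norm_eq_abs, RCLike.norm_natCast,
    mul_div_assoc]
  gcongr
  exact hc k

lemma hasDerivAt_tsum_mul_pow_div_factorial (hc : ∀ k, |c k| ≤ C) (x : ℝ) :
    HasDerivAt (fun y => ∑' k, c k * y ^ k / k !) (∑' k, c (k + 1) * x ^ k / k !) x := by
  have hshift : (fun y => ∑' k, c k * y ^ k / k !) =
      fun y => c 0 + ∑' k, c (k + 1) * y ^ (k + 1) / (k + 1) ! := by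
    ext y
    simp [(summable_mul_pow_div_factorial hc y).tsum_eq_zero_add]
  rw [hshift]
  refine HasDerivAt.const_add _ ?_
  set R := |x| + 1
  have hx : x ∈ Ioo (-R) R := ⟨by linarith [neg_abs_le x], by linarith [le_abs_self x]⟩
  refine hasDerivAt_tsum_of_isPreconnected (u := fun k => C * (R ^ k / k !))
    (g := fun k y => c (k + 1) * y ^ (k + 1) / (k + 1) !)
    (g' := fun k y => c (k + 1) * y ^ k / k !)
    ((summable_pow_div_factorial R).mul_left C) isOpen_Ioo isPreconnected_Ioo
    (fun k y _ => ?_) (fun k y hy => ?_) hx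
    ((summable_nat_add_iff 1).mpr (summable_mul_pow_div_factorial hc x)) hx
  · have := ((hasDerivAt_pow (k + 1) y).const_mul (c (k + 1))).div_const ((k + 1) ! : ℝ)
    refine this.congr_deriv ?_
    rw [Nat.factorial_succ]
    push_cast
    field_simp
  · have hyR : |y| ≤ R := abs_le.mpr ⟨hy.1.le, hy.2.le⟩
    rw [norm_div, norm_mul, norm_pow, Real.norm_eq_abs, Real.norm_eq_abs, RCLike.norm_natCast,
      mul_div_assoc]
    gcongr
    · exact (abs_nonneg _).trans (hc 0)
    · exact hc (k + 1)

lemma monotoneOn_exp_neg_mul_tsum_mul_pow_div_factorial (hc : ∀ k, |c k| ≤ C)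
    (hmono : Monotone c) :
    MonotoneOn (fun x => exp (-x) * ∑' k, c k * x ^ k / k !) (Ici 0) := by
  have hderiv (x : ℝ) : HasDerivAt (fun x => exp (-x) * ∑' k, c k * x ^ k / k !)
      (exp (-x) * ∑' k, (c (k + 1) - c k) * x ^ k / k !) x := by
    refine ((hasDerivAt_neg x).exp.mul
      (hasDerivAt_tsum_mul_pow_div_factorial hc x)).congr_deriv ?_
    simp only [sub_mul, sub_div]
    rw [Summable.tsum_sub (summable_mul_pow_div_factorial (fun k => hc (k + 1)) x)
      (summable_mul_pow_div_factorial hc x)]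
    ring
  refine monotoneOn_of_hasDerivWithinAt_nonneg (convex_Ici 0)
    (fun x _ => (hderiv x).continuousAt.continuousWithinAt)
    (fun x _ => (hderiv x).hasDerivWithinAt) fun x hx => ?_
  rw [interior_Ici, mem_Ioi] at hx
  have hstep (k : ℕ) : 0 ≤ c (k + 1) - c k := sub_nonneg.mpr (hmono k.le_succ)
  exact mul_nonneg (exp_pos _).le (tsum_nonneg fun k => by have := hstep k; positivity)

end ExpSeries

lemma integral_Ioi_eq_neg_of_hasDerivAt {f f' : ℝ → ℝ} {b : ℝ}
    (hderiv : ∀ t ∈ Ici b, HasDerivAt f (f' t) t) (hf : IntegrableOn f (Ioi b))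
    (hf' : IntegrableOn f' (Ioi b)) : ∫ t in Ioi b, f' t = -f b := by
  have hlim := tendsto_zero_of_hasDerivAt_of_integrableOn_Ioi
    (fun t ht => hderiv t (mem_Ioi.mp ht).le) hf' hf
  rw [integral_Ioi_of_hasDerivAt_of_tendsto' hderiv hf' hlim, zero_sub]

lemma integrable_pow_mul_exp_neg_sq_div_two (m : ℕ) :
    Integrable fun t : ℝ => t ^ m * exp (-t ^ 2 / 2) := by
  refine (integrable_rpow_mul_exp_neg_mul_sq (b := 1 / 2) (s := m) (by norm_num)
    (by linarith [m.cast_nonneg (α := ℝ)])).congr (ae_of_all _ fun t => ?_)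
  simp only [rpow_natCast]
  ring_nf

lemma hasDerivAt_pow_succ_mul_exp_neg_sq_div_two (m : ℕ) (t : ℝ) :
    HasDerivAt (fun t : ℝ => t ^ (m + 1) * exp (-t ^ 2 / 2))
      ((m + 1) * (t ^ m * exp (-t ^ 2 / 2)) - t ^ (m + 2) * exp (-t ^ 2 / 2)) t := by
  refine ((hasDerivAt_pow (m + 1) t).mul
    ((hasDerivAt_pow 2 t).fun_neg.div_const 2).exp).congr_deriv ?_
  push_cast
  ring

noncomputable def gaussTailMoment (m : ℕ) (b : ℝ) : ℝ :=
  ∫ t in Ioi b, t ^ m * exp (-t ^ 2 / 2)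

lemma gaussTailMoment_one (b : ℝ) : gaussTailMoment 1 b = exp (-b ^ 2 / 2) := by
  have hderiv (t : ℝ) :
      HasDerivAt (fun t : ℝ => -exp (-t ^ 2 / 2)) (t ^ 1 * exp (-t ^ 2 / 2)) t := by
    refine ((hasDerivAt_pow 2 t).fun_neg.div_const 2).exp.fun_neg.congr_deriv ?_
    push_cast
    ring
  rw [gaussTailMoment, integral_Ioi_eq_neg_of_hasDerivAt (fun t _ => hderiv t)
    (by simpa using (integrable_pow_mul_exp_neg_sq_div_two 0).neg.integrableOn)
    (integrable_pow_mul_exp_neg_sq_div_two 1).integrableOn, neg_neg]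

lemma gaussTailMoment_add_two (m : ℕ) (b : ℝ) :
    gaussTailMoment (m + 2) b =
      (m + 1) * gaussTailMoment m b + b ^ (m + 1) * exp (-b ^ 2 / 2) := by
  have hint := integrable_pow_mul_exp_neg_sq_div_two
  have hderiv := hasDerivAt_pow_succ_mul_exp_neg_sq_div_two m
  have hftc := integral_Ioi_eq_neg_of_hasDerivAt (b := b) (fun t _ => hderiv t)
    (hint (m + 1)).integrableOn ((hint m).const_mul _ |>.sub (hint (m + 2))).integrableOn
  rw [integral_sub ((hint m).const_mul _).integrableOn (hint (m + 2)).integrableOn,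
    integral_const_mul] at hftc
  rw [gaussTailMoment, gaussTailMoment]
  linarith

lemma gaussTailMoment_nonneg (m : ℕ) {b : ℝ} (hb : 0 ≤ b) : 0 ≤ gaussTailMoment m b :=
  setIntegral_nonneg measurableSet_Ioi fun t ht => by have := hb.trans ht.le; positivity

lemma gaussTailMoment_antitoneOn (m : ℕ) : AntitoneOn (gaussTailMoment m) (Ici 0) := by
  rintro b₁ (hb₁ : 0 ≤ b₁) _ _ hle
  refine setIntegral_mono_set (integrable_pow_mul_exp_neg_sq_div_two m).integrableOn
    (ae_restrict_of_forall_mem measurableSet_Ioi fun t ht => ?_) (Ioi_subset_Ioi hle).eventuallyLE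
  have := hb₁.trans (ht : b₁ < t).le
  positivity

lemma gaussTailMoment_two_mul_add_one_zero (n : ℕ) :
    gaussTailMoment (2 * n + 1) 0 = 2 ^ n * n ! := by
  induction n with
  | zero => simp [gaussTailMoment_one]
  | succ n ih =>
    rw [show 2 * (n + 1) + 1 = 2 * n + 1 + 2 by ring, gaussTailMoment_add_two, ih,
      Nat.factorial_succ]
    push_cast
    ring

/-- After the substitution `u = t² / 2` this is the regularized upper incomplete gamma function
`Γ(n + 1, b² / 2) / n!`, the probability that a Poisson variable of mean `b² / 2` is at most `n`. -/
noncomputable def gaussTailCoeff (n : ℕ) (b : ℝ) : ℝ :=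
  gaussTailMoment (2 * n + 1) b / (2 ^ n * n !)

lemma gaussTailCoeff_nonneg (n : ℕ) {b : ℝ} (hb : 0 ≤ b) : 0 ≤ gaussTailCoeff n b :=
  div_nonneg (gaussTailMoment_nonneg _ hb) (by positivity)

lemma gaussTailCoeff_le_one (n : ℕ) {b : ℝ} (hb : 0 ≤ b) : gaussTailCoeff n b ≤ 1 := by
  rw [gaussTailCoeff, div_le_one (by positivity), ← gaussTailMoment_two_mul_add_one_zero]
  exact gaussTailMoment_antitoneOn _ self_mem_Ici hb hb

lemma abs_gaussTailCoeff_le_one (n : ℕ) {b : ℝ} (hb : 0 ≤ b) : |gaussTailCoeff n b| ≤ 1 :=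
  abs_le.mpr ⟨by linarith [gaussTailCoeff_nonneg n hb], gaussTailCoeff_le_one n hb⟩

lemma gaussTailCoeff_antitoneOn (n : ℕ) : AntitoneOn (gaussTailCoeff n) (Ici 0) :=
  fun _ hb₁ _ hb₂ hle => div_le_div_of_nonneg_right (gaussTailMoment_antitoneOn _ hb₁ hb₂ hle)
    (by positivity)

lemma gaussTailCoeff_succ (n : ℕ) (b : ℝ) : gaussTailCoeff (n + 1) b =
    gaussTailCoeff n b + (b ^ 2) ^ (n + 1) * exp (-b ^ 2 / 2) / (2 ^ (n + 1) * (n + 1) !) := by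
  rw [gaussTailCoeff, gaussTailCoeff, show 2 * (n + 1) + 1 = 2 * n + 1 + 2 by ring,
    gaussTailMoment_add_two, Nat.factorial_succ]
  push_cast
  field_simp
  ring

lemma monotone_gaussTailCoeff (b : ℝ) : Monotone fun n => gaussTailCoeff n b :=
  monotone_nat_of_le_succ fun n => by
    rw [gaussTailCoeff_succ, le_add_iff_nonneg_right]
    positivity

lemma marcumQ1_integrand_term_eq (a t : ℝ) (k : ℕ) :
    t * exp (-(t ^ 2 + a ^ 2) / 2) * ((a * t / 2) ^ (2 * k) / (k ! : ℝ) ^ 2) =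
      exp (-(a ^ 2 / 2)) * ((a ^ 2 / 2) ^ k / k !) / (2 ^ k * k !) *
        (t ^ (2 * k + 1) * exp (-t ^ 2 / 2)) := by
  have hpow : (a * t / 2) ^ (2 * k) = (a ^ 2 / 2) ^ k * (t ^ 2) ^ k / 2 ^ k := by
    rw [pow_mul, ← mul_pow, ← div_pow]
    ring
  rw [hpow, pow_succ t (2 * k), pow_mul,
    show -(t ^ 2 + a ^ 2) / 2 = -t ^ 2 / 2 + -(a ^ 2 / 2) by ring, exp_add]
  field_simp

lemma marcumQ1_eq_exp_neg_mul_tsum (a : ℝ) {b : ℝ} (hb : 0 ≤ b) :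
    marcumQ1 a b = exp (-(a ^ 2 / 2)) * ∑' k, gaussTailCoeff k b * (a ^ 2 / 2) ^ k / k ! := by
  set F : ℕ → ℝ → ℝ := fun k t =>
    t * exp (-(t ^ 2 + a ^ 2) / 2) * ((a * t / 2) ^ (2 * k) / (k ! : ℝ) ^ 2)
  have hF_int (k : ℕ) : Integrable (F k) (volume.restrict (Ioi b)) := by
    simp only [F, marcumQ1_integrand_term_eq]
    exact ((integrable_pow_mul_exp_neg_sq_div_two _).const_mul _).integrableOn
  have hF_integral (k : ℕ) :
      ∫ t in Ioi b, F k t = exp (-(a ^ 2 / 2)) * (gaussTailCoeff k b * (a ^ 2 / 2) ^ k / k !) := by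
    simp only [F, marcumQ1_integrand_term_eq, integral_const_mul]
    rw [← gaussTailMoment, gaussTailCoeff]
    ring
  have hF_norm (k : ℕ) : ∫ t in Ioi b, ‖F k t‖ = ∫ t in Ioi b, F k t := by
    refine setIntegral_congr_fun measurableSet_Ioi fun t ht => Real.norm_of_nonneg ?_
    have := hb.trans (ht : b < t).le
    simp only [F, marcumQ1_integrand_term_eq]
    positivity
  have hsum := (summable_mul_pow_div_factorial (abs_gaussTailCoeff_le_one · hb)
    (a ^ 2 / 2)).mul_left (exp (-(a ^ 2 / 2)))
  rw [marcumQ1, ← tsum_mul_left]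
  simp only [besselI0, ← tsum_mul_left]
  rw [← integral_tsum_of_summable_integral_norm hF_int (by simpa only [hF_norm, hF_integral])]
  exact tsum_congr hF_integral

theorem marcumQ1_monotonicity :
    (∀ b : ℝ, 0 ≤ b → MonotoneOn (fun a => marcumQ1 a b) (Set.Ici 0)) ∧
    (∀ a : ℝ, 0 ≤ a → AntitoneOn (fun b => marcumQ1 a b) (Set.Ici 0)) := by
  constructor
  · rintro b hb a₁ (ha₁ : 0 ≤ a₁) a₂ - hle
    simp only [marcumQ1_eq_exp_neg_mul_tsum _ hb]
    exact monotoneOn_exp_neg_mul_tsum_mul_pow_div_factorial (abs_gaussTailCoeff_le_one · hb)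
      (monotone_gaussTailCoeff b) (by positivity : (0 : ℝ) ≤ a₁ ^ 2 / 2)
      (by positivity : (0 : ℝ) ≤ a₂ ^ 2 / 2) (by gcongr)
  · intro a _ b₁ hb₁ b₂ hb₂ hle
    simp only [marcumQ1_eq_exp_neg_mul_tsum _ hb₁, marcumQ1_eq_exp_neg_mul_tsum _ hb₂]
    have hsum {b : ℝ} (hb : b ∈ Ici 0) := summable_mul_pow_div_factorial
      (abs_gaussTailCoeff_le_one · hb) (a ^ 2 / 2)
    gcongr with k
    exacts [hsum hb₂, hsum hb₁, gaussTailCoeff_antitoneOn k hb₁ hb₂ hle]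
end
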